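/- Let H_{j+1}(q) be the Hecke algebra and L_u : H_{j+1}(q) → H_{j+1}(q) the operator of left multiplication by u. Then for j ≥ 1, Tr(L_{σ_1σ_2···σ_j} on H_{j+1}) = (q - q⁻¹)·Tr(L_{σ_1σ_2···σ_{j-1}} on H_j), and for u ∈ H_j(q) ⊂ H_{j+1}(q), Tr(L_u on H_{j+1}) = (j+1)·Tr(L_u on H_j). Consequently Tr(L_{σ_{k-l+1}···σ_k} on H_j) = (j!/(l+1)!)·(q-q⁻¹)^l for j > k ≥ l. -/
import Mathlib


/-- The ascending word `g_s g_{s+1} ⋯ g_{s+len-1}` in the generators `g`. -/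
def ascWordG {A : Type*} [Monoid A] (g : ℕ → A) (s len : ℕ) : A :=
  ((List.range len).map fun t => g (s + t)).prod

/-- The descending word `g_top g_{top-1} ⋯ g_{top-len+1}` in the generators `g`. -/
def descWordG {A : Type*} [Monoid A] (g : ℕ → A) (top len : ℕ) : A :=
  ((List.range len).map fun t => g (top - t)).prod

namespace Stmt19Aux

section MonoidLemmas
variable {A : Type*} [Monoid A] (g : ℕ → A)

lemma asc_zero (s : ℕ) : ascWordG g s 0 = 1 := rfl

lemma asc_succ (s l : ℕ) : ascWordG g s (l + 1) = ascWordG g s l * g (s + l) := by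
  simp [ascWordG, List.range_succ]

lemma asc_one (s : ℕ) : ascWordG g s 1 = g s := by
  simp [ascWordG, List.range_succ]

lemma asc_add (s a b : ℕ) :
    ascWordG g s (a + b) = ascWordG g s a * ascWordG g (s + a) b := by
  induction b with
  | zero => simp [asc_zero]
  | succ b ih =>
      rw [← Nat.add_assoc, asc_succ, ih, asc_succ, mul_assoc, Nat.add_assoc, Nat.add_comm a b,
        ← Nat.add_assoc]

lemma asc_succ' (s l : ℕ) : ascWordG g s (l + 1) = g s * ascWordG g (s + 1) l := by
  rw [Nat.add_comm l 1, asc_add, asc_one]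

end MonoidLemmas

section RingLemmas
variable {K A : Type} [Field K] [Ring A] [Algebra K A]
variable (q : K) (g : ℕ → A) (n : ℕ)

lemma commute_asc_left
    (hc : ∀ i j, 1 ≤ i → i + 2 ≤ j → j ≤ n → g i * g j = g j * g i)
    (i s : ℕ) (hi : 1 ≤ i) (h : i + 2 ≤ s) :
    ∀ l, s + l ≤ n + 1 → Commute (g i) (ascWordG g s l) := by
  intro l
  induction l with
  | zero => intro _; simp [asc_zero, Commute.one_right]
  | succ l ih =>
      intro h2
      rw [asc_succ]
      exact (ih (by omega)).mul_right (hc i (s + l) hi (by omega) (by omega))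

lemma commute_asc_right
    (hc : ∀ i j, 1 ≤ i → i + 2 ≤ j → j ≤ n → g i * g j = g j * g i)
    (i s : ℕ) (hs : 1 ≤ s) (hi : i ≤ n) :
    ∀ l, s + l + 1 ≤ i → Commute (g i) (ascWordG g s l) := by
  intro l
  induction l with
  | zero => intro _; simp [asc_zero, Commute.one_right]
  | succ l ih =>
      intro h2
      rw [asc_succ]
      exact (ih (by omega)).mul_right ((hc (s + l) i (by omega) (by omega) hi).symm)

lemma cyc
    (hb : ∀ i, 1 ≤ i → i + 1 ≤ n → g i * g (i + 1) * g i = g (i + 1) * g i * g (i + 1))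
    (hc : ∀ i j, 1 ≤ i → i + 2 ≤ j → j ≤ n → g i * g j = g j * g i)
    (i : ℕ) (hi1 : 1 ≤ i) (hi2 : i + 1 ≤ n) :
    ascWordG g 1 n * g i = g (i + 1) * ascWordG g 1 n := by
  obtain ⟨a, b, rfl, hn⟩ : ∃ a b, i = a + 1 ∧ n = a + 2 + b := ⟨i - 1, n - i - 1, by omega, by omega⟩
  subst hn
  have e1 : ascWordG g 1 (a + 2 + b) =
      ascWordG g 1 a * (g (a + 1) * g (a + 2)) * ascWordG g (a + 3) b := by
    rw [show a + 2 + b = a + (2 + b) by omega, asc_add g 1 a (2 + b), asc_add g (1 + a) 2 b]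
    have h2 : ascWordG g (1 + a) 2 = g (a + 1) * g (a + 2) := by
      rw [show (2:ℕ) = 1 + 1 from rfl, asc_add, asc_one, asc_one]
      congr 2 <;> omega
    rw [h2, show 1 + a + 2 = a + 3 by omega]
    simp only [mul_assoc]
  have hcomm1 : Commute (g (a + 1)) (ascWordG g (a + 3) b) :=
    commute_asc_left g (a + 2 + b) hc (a + 1) (a + 3) (by omega) (by omega) b (by omega)
  have hcomm2 : Commute (g (a + 2)) (ascWordG g 1 a) :=
    commute_asc_right g (a + 2 + b) hc (a + 2) 1 (by omega) (by omega) a (by omega)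
  rw [e1]
  calc ascWordG g 1 a * (g (a + 1) * g (a + 2)) * ascWordG g (a + 3) b * g (a + 1)
      = ascWordG g 1 a * (g (a + 1) * g (a + 2) * g (a + 1)) * ascWordG g (a + 3) b := by
        simp only [mul_assoc]
        rw [← hcomm1.eq]
    _ = ascWordG g 1 a * (g (a + 2) * g (a + 1) * g (a + 2)) * ascWordG g (a + 3) b := by
        rw [show a + 1 + 1 = a + 2 from rfl] at *
        rw [hb (a + 1) (by omega) (by omega)]
    _ = g (a + 2) * (ascWordG g 1 a * (g (a + 1) * g (a + 2)) * ascWordG g (a + 3) b) := by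
        rw [← mul_assoc, ← mul_assoc, ← hcomm2.eq]
        simp only [mul_assoc]

lemma cyc'
    (hb : ∀ i, 1 ≤ i → i + 1 ≤ n → g i * g (i + 1) * g i = g (i + 1) * g i * g (i + 1))
    (hc : ∀ i j, 1 ≤ i → i + 2 ≤ j → j ≤ n → g i * g j = g j * g i)
    (l : ℕ) : ∀ s, 1 ≤ s → s + l ≤ n →
    ascWordG g 1 n * ascWordG g s l = ascWordG g (s + 1) l * ascWordG g 1 n := by
  induction l with
  | zero => intro s _ _; simp [asc_zero]
  | succ l ih =>
      intro s hs hsl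
      rw [asc_succ' g s l, asc_succ' g (s + 1) l, ← mul_assoc,
        cyc g n hb hc s hs (by omega), mul_assoc, ih (s + 1) (by omega) (by omega), ← mul_assoc]

lemma isUnit_g (q : K)
    (hh : ∀ i, 1 ≤ i → i ≤ n → g i * g i = (q - q⁻¹) • g i + 1)
    (i : ℕ) (hi1 : 1 ≤ i) (hi2 : i ≤ n) : IsUnit (g i) := by
  have h1 : g i * (g i - (q - q⁻¹) • 1) = 1 := by
    rw [mul_sub, hh i hi1 hi2, mul_smul_comm, mul_one]
    abel
  have h2 : (g i - (q - q⁻¹) • 1) * g i = 1 := by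
    rw [sub_mul, hh i hi1 hi2, smul_mul_assoc, one_mul]
    abel
  exact ⟨⟨g i, g i - (q - q⁻¹) • 1, h1, h2⟩, rfl⟩

lemma isUnit_asc (q : K)
    (hh : ∀ i, 1 ≤ i → i ≤ n → g i * g i = (q - q⁻¹) • g i + 1)
    (s : ℕ) (hs : 1 ≤ s) : ∀ l, s + l ≤ n + 1 → IsUnit (ascWordG g s l) := by
  intro l
  induction l with
  | zero => intro _; simp [asc_zero]
  | succ l ih =>
      intro h
      rw [asc_succ]
      exact (ih (by omega)).mul (isUnit_g g n q hh (s + l) (by omega) (by omega))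

end RingLemmas

section TraceLemmas
variable {K M N : Type} [Field K] [AddCommGroup M] [Module K M] [AddCommGroup N] [Module K N]

lemma trace_transfer (e : M ≃ₗ[K] N) (f : N →ₗ[K] N) (gg : M →ₗ[K] M)
    (h : ∀ v, e (gg v) = f (e v)) :
    LinearMap.trace K N f = LinearMap.trace K M gg := by
  have : f = e.conj gg := by
    ext x
    rw [LinearEquiv.conj_apply]
    simp only [LinearMap.coe_comp, Function.comp_apply, LinearEquiv.coe_coe]
    rw [h (e.symm x), e.apply_symm_apply]
  rw [this, LinearMap.trace_conj']

lemma trace_pi_blocks [FiniteDimensional K M] {n : ℕ} (A : Fin n → Fin n → (M →ₗ[K] M)) :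
    LinearMap.trace K (Fin n → M)
      (LinearMap.pi fun m => ∑ k, (A m k).comp (LinearMap.proj k)) =
    ∑ m, LinearMap.trace K M (A m m) := by
  classical
  rw [LinearMap.trace_eq_matrix_trace K (Pi.basis fun _ : Fin n => Module.finBasis K M),
    Matrix.trace]
  have hdiag : ∀ mi : Σ _ : Fin n, Fin (Module.finrank K M),
      Matrix.diag (LinearMap.toMatrix (Pi.basis fun _ : Fin n => Module.finBasis K M)
          (Pi.basis fun _ : Fin n => Module.finBasis K M)
          (LinearMap.pi fun m => ∑ k, (A m k).comp (LinearMap.proj k))) mi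
        = (Module.finBasis K M).repr (A mi.1 mi.1 (Module.finBasis K M mi.2)) mi.2 := by
    rintro ⟨m, a⟩
    rw [Matrix.diag, LinearMap.toMatrix_apply, Pi.basis_apply, Pi.basis_repr]
    have h1 : (∑ k, (A m k) ((Pi.single m (Module.finBasis K M a) : Fin n → M) k))
        = A m m (Module.finBasis K M a) := by
      rw [Finset.sum_eq_single m]
      · simp
      · intro k _ hk
        simp [Pi.single_eq_of_ne hk]
      · simp
    rw [LinearMap.pi_apply, LinearMap.sum_apply]
    simp only [LinearMap.coe_comp, Function.comp_apply, LinearMap.proj_apply]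
    rw [h1]
  have hsum : ∀ m : Fin n, LinearMap.trace K M (A m m)
      = ∑ a, (Module.finBasis K M).repr (A m m (Module.finBasis K M a)) a := by
    intro m
    rw [LinearMap.trace_eq_matrix_trace K (Module.finBasis K M), Matrix.trace]
    simp only [Matrix.diag, LinearMap.toMatrix_apply]
  simp only [hdiag, hsum]
  rw [← Finset.univ_sigma_univ, Finset.sum_sigma]

end TraceLemmas

section Main
variable {K : Type} [Field K] (q : K)
variable (H : ℕ → Type) [∀ m, Ring (H m)] [∀ m, Algebra K (H m)]
variable (σ : (m : ℕ) → ℕ → H m) (incl : (m : ℕ) → (H m →ₐ[K] H (m + 1)))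

theorem part1_lemma (j : ℕ) [FiniteDimensional K (H j)]
    (hdecompR : Function.Bijective fun v : Fin (j + 1) → H j =>
      ∑ k : Fin (j + 1), incl j (v k) * descWordG (σ (j + 1)) j k.val)
    (u : H j) :
    LinearMap.trace K (H (j + 1)) (LinearMap.mulLeft K (incl j u)) =
      ((j : K) + 1) * LinearMap.trace K (H j) (LinearMap.mulLeft K u) := by
  classical
  set Φ : (Fin (j + 1) → H j) →ₗ[K] H (j + 1) :=
    ∑ k : Fin (j + 1), (LinearMap.mulRight K (descWordG (σ (j + 1)) j k.val)).comp
      ((incl j).toLinearMap.comp (LinearMap.proj k)) with hΦdef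
  have hΦ : ⇑Φ = fun v : Fin (j + 1) → H j =>
      ∑ k : Fin (j + 1), incl j (v k) * descWordG (σ (j + 1)) j k.val := by
    funext v
    rw [hΦdef, LinearMap.sum_apply]
    simp [LinearMap.mulRight_apply]
  have hbij : Function.Bijective ⇑Φ := by rw [hΦ]; exact hdecompR
  set e := LinearEquiv.ofBijective Φ hbij with he
  set A : Fin (j + 1) → Fin (j + 1) → (H j →ₗ[K] H j) :=
    fun m k => if m = k then LinearMap.mulLeft K u else 0 with hA
  set G : (Fin (j + 1) → H j) →ₗ[K] (Fin (j + 1) → H j) :=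
    LinearMap.pi fun m => ∑ k, (A m k).comp (LinearMap.proj k) with hG
  have hGapp : ∀ (v : Fin (j + 1) → H j) (m : Fin (j + 1)), G v m = u * v m := by
    intro v m
    rw [hG, LinearMap.pi_apply, LinearMap.sum_apply]
    rw [Finset.sum_eq_single m]
    · simp [hA]
    · intro k _ hk
      simp [hA, Ne.symm hk]
    · simp
  have key : ∀ v, e (G v) = LinearMap.mulLeft K (incl j u) (e v) := by
    intro v
    rw [LinearMap.mulLeft_apply, he, LinearEquiv.ofBijective_apply,
      LinearEquiv.ofBijective_apply, congrFun hΦ (G v), congrFun hΦ v, Finset.mul_sum]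
    refine Finset.sum_congr rfl fun k _ => ?_
    rw [hGapp, map_mul, mul_assoc]
  rw [trace_transfer e (LinearMap.mulLeft K (incl j u)) G key, hG, trace_pi_blocks]
  have hdiagA : ∀ m : Fin (j + 1), A m m = LinearMap.mulLeft K u := by
    intro m; simp [hA]
  simp only [hdiagA]
  rw [Finset.sum_const, Finset.card_univ, Fintype.card_fin, nsmul_eq_mul]
  push_cast
  ring

theorem part2_lemma (j : ℕ) (hj : 1 ≤ j) [FiniteDimensional K (H j)]
    (hincl : ∀ m i, incl m (σ m i) = σ (m + 1) i)
    (hbraid : ∀ i, 1 ≤ i → i + 1 ≤ j →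
      σ (j+1) i * σ (j+1) (i + 1) * σ (j+1) i = σ (j+1) (i + 1) * σ (j+1) i * σ (j+1) (i + 1))
    (hcomm : ∀ i i2, 1 ≤ i → i + 2 ≤ i2 → i2 ≤ j → σ (j+1) i * σ (j+1) i2 = σ (j+1) i2 * σ (j+1) i)
    (hhecke : ∀ i, 1 ≤ i → i ≤ j → σ (j+1) i * σ (j+1) i = (q - q⁻¹) • σ (j+1) i + 1)
    (hdecompL : Function.Bijective fun v : Fin (j + 1) → H j =>
      ∑ k : Fin (j + 1), ascWordG (σ (j + 1)) (j - k.val + 1) k.val * incl j (v k)) :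
    LinearMap.trace K (H (j + 1)) (LinearMap.mulLeft K (ascWordG (σ (j + 1)) 1 j)) =
      (q - q⁻¹) *
        LinearMap.trace K (H j) (LinearMap.mulLeft K (ascWordG (σ j) 1 (j - 1))) := by
  classical
  have incl_asc : ∀ (s l : ℕ), incl j (ascWordG (σ j) s l) = ascWordG (σ (j+1)) s l := by
    intro s l
    unfold ascWordG
    rw [map_list_prod, List.map_map]
    congr 1
    apply List.map_congr_left
    intro t _
    simp only [Function.comp_apply]
    exact hincl j (s + t)
  -- key algebraic identity
  have hkey : ∀ k', 1 ≤ k' → k' ≤ j →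
      ascWordG (σ (j+1)) 1 j * ascWordG (σ (j+1)) (j - k' + 1) k' =
        (q - q⁻¹) • (ascWordG (σ (j+1)) 1 j * ascWordG (σ (j+1)) (j - k' + 1) (k' - 1)) +
          ascWordG (σ (j+1)) (j - k' + 2) (k' - 1) * ascWordG (σ (j+1)) 1 (j - 1) := by
    intro k' h1 h2
    obtain ⟨t, rfl⟩ : ∃ t, k' = t + 1 := ⟨k' - 1, by omega⟩
    have e1 : j - (t + 1) + 1 = j - t := by omega
    have e2 : j - (t + 1) + 2 = j - t + 1 := by omega
    have e3 : t + 1 - 1 = t := by omega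
    rw [e1, e2, e3]
    have hsplit : ascWordG (σ (j+1)) (j - t) (t + 1) = ascWordG (σ (j+1)) (j - t) t * σ (j+1) j := by
      rw [asc_succ]; congr 2; omega
    have hcyc := cyc' (σ (j+1)) j hbraid hcomm t (j - t) (by omega) (by omega)
    have husplit : ascWordG (σ (j+1)) 1 j = ascWordG (σ (j+1)) 1 (j - 1) * σ (j+1) j := by
      have h := asc_succ (σ (j+1)) 1 (j - 1)
      rw [show (j - 1) + 1 = j by omega, show 1 + (j - 1) = j by omega] at h
      exact h
    have hgj : σ (j+1) j * σ (j+1) j = (q - q⁻¹) • σ (j+1) j + 1 := hhecke j hj le_rfl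
    rw [hsplit, ← mul_assoc, hcyc, mul_assoc, husplit, mul_assoc, hgj]
    simp only [mul_add, mul_one, mul_smul_comm, mul_assoc]
  -- the linear equivalence
  set Φ : (Fin (j + 1) → H j) →ₗ[K] H (j + 1) :=
    ∑ k : Fin (j + 1), (LinearMap.mulLeft K (ascWordG (σ (j + 1)) (j - k.val + 1) k.val)).comp
      ((incl j).toLinearMap.comp (LinearMap.proj k)) with hΦdef
  have hΦ : ⇑Φ = fun v : Fin (j + 1) → H j =>
      ∑ k : Fin (j + 1), ascWordG (σ (j + 1)) (j - k.val + 1) k.val * incl j (v k) := by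
    funext v
    rw [hΦdef, LinearMap.sum_apply]
    simp [LinearMap.mulLeft_apply]
  have hbij : Function.Bijective ⇑Φ := by rw [hΦ]; exact hdecompL
  set e := LinearEquiv.ofBijective Φ hbij with he
  set A : Fin (j + 1) → Fin (j + 1) → (H j →ₗ[K] H j) :=
    fun m k => if k.val = 0 then (if m = Fin.last j then LinearMap.id else 0)
      else ((if m = Fin.last j then
          (q - q⁻¹) • LinearMap.mulLeft K (ascWordG (σ j) (j - k.val + 1) (k.val - 1)) else 0) +
        (if m.val + 1 = k.val then LinearMap.mulLeft K (ascWordG (σ j) 1 (j - 1)) else 0)) with hA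
  set G : (Fin (j + 1) → H j) →ₗ[K] (Fin (j + 1) → H j) :=
    LinearMap.pi fun m => ∑ k, (A m k).comp (LinearMap.proj k) with hG
  have hlast : ascWordG (σ (j+1)) (j - (Fin.last j).val + 1) (Fin.last j).val
      = ascWordG (σ (j+1)) 1 j := by
    simp only [Fin.val_last, Nat.sub_self, Nat.zero_add]
  -- per-column identity
  have hper : ∀ (k : Fin (j + 1)) (x : H j),
      ∑ m : Fin (j + 1), ascWordG (σ (j + 1)) (j - m.val + 1) m.val * incl j (A m k x) =
        ascWordG (σ (j + 1)) 1 j *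
          (ascWordG (σ (j + 1)) (j - k.val + 1) k.val * incl j x) := by
    intro k x
    rcases Nat.eq_zero_or_pos k.val with hk0 | hkpos
    · have hAx : ∀ m : Fin (j + 1), A m k x = if m = Fin.last j then x else 0 := by
        intro m
        simp only [hA]
        rw [if_pos hk0]
        split <;> simp
      simp only [hAx]
      rw [Finset.sum_eq_single (Fin.last j)]
      · rw [if_pos rfl, hlast, hk0, asc_zero, one_mul]
      · intro m _ hm
        rw [if_neg hm]
        simp
      · simp
    · set kp : Fin (j + 1) := ⟨k.val - 1, by omega⟩ with hkp
      have hAx : ∀ m : Fin (j + 1), A m k x =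
          (if m = Fin.last j then
            (q - q⁻¹) • (ascWordG (σ j) (j - k.val + 1) (k.val - 1) * x) else 0) +
          (if m = kp then ascWordG (σ j) 1 (j - 1) * x else 0) := by
        intro m
        have hkpval : kp.val = k.val - 1 := by rw [hkp]
        simp only [hA]
        rw [if_neg (by omega)]
        rw [LinearMap.add_apply]
        congr 1
        · split <;> simp
        · have heq : (m.val + 1 = k.val) = (m = kp) := by
            apply propext
            constructor
            · intro h; apply Fin.ext; omega
            · intro h; rw [h]; omega
          simp only [heq]
          split <;> simp
      simp only [hAx, map_add, mul_add]
      rw [Finset.sum_add_distrib]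
      have hs1 : ∑ m : Fin (j + 1), ascWordG (σ (j + 1)) (j - m.val + 1) m.val *
          incl j (if m = Fin.last j then
            (q - q⁻¹) • (ascWordG (σ j) (j - k.val + 1) (k.val - 1) * x) else 0) =
          (q - q⁻¹) • (ascWordG (σ (j + 1)) 1 j *
            (ascWordG (σ (j + 1)) (j - k.val + 1) (k.val - 1) * incl j x)) := by
        rw [Finset.sum_eq_single (Fin.last j)]
        · rw [if_pos rfl, hlast, map_smul, mul_smul_comm, map_mul, incl_asc]
        · intro m _ hm; rw [if_neg hm]; simp
        · simp
      have hs2 : ∑ m : Fin (j + 1), ascWordG (σ (j + 1)) (j - m.val + 1) m.val *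
          incl j (if m = kp then ascWordG (σ j) 1 (j - 1) * x else 0) =
          ascWordG (σ (j + 1)) (j - k.val + 2) (k.val - 1) *
            (ascWordG (σ (j + 1)) 1 (j - 1) * incl j x) := by
        rw [Finset.sum_eq_single kp]
        · have hkpval : kp.val = k.val - 1 := rfl
          have hkle : k.val ≤ j := Nat.lt_succ_iff.mp k.isLt
          rw [if_pos rfl, map_mul, incl_asc, ← mul_assoc, ← mul_assoc]
          congr 2
          rw [hkpval]
          congr 1
          omega
        · intro m _ hm; rw [if_neg hm]; simp
        · simp
      have hkle : k.val ≤ j := Nat.lt_succ_iff.mp k.isLt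
      rw [hs1, hs2]
      have expand : ascWordG (σ (j+1)) 1 j *
            (ascWordG (σ (j+1)) (j - k.val + 1) k.val * incl j x)
          = (ascWordG (σ (j+1)) 1 j * ascWordG (σ (j+1)) (j - k.val + 1) k.val) * incl j x := by
        rw [mul_assoc]
      rw [expand, hkey k.val hkpos hkle, add_mul, smul_mul_assoc, mul_assoc, mul_assoc]
  have key : ∀ v, e (G v) = LinearMap.mulLeft K (ascWordG (σ (j + 1)) 1 j) (e v) := by
    intro v
    rw [LinearMap.mulLeft_apply, he, LinearEquiv.ofBijective_apply,
      LinearEquiv.ofBijective_apply, congrFun hΦ (G v), congrFun hΦ v, Finset.mul_sum]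
    have hGapp : ∀ m : Fin (j + 1), G v m = ∑ k, A m k (v k) := by
      intro m
      rw [hG, LinearMap.pi_apply, LinearMap.sum_apply]
      simp
    calc ∑ m : Fin (j + 1), ascWordG (σ (j + 1)) (j - m.val + 1) m.val * incl j (G v m)
        = ∑ m : Fin (j + 1), ∑ k : Fin (j + 1),
            ascWordG (σ (j + 1)) (j - m.val + 1) m.val * incl j (A m k (v k)) := by
          refine Finset.sum_congr rfl fun m _ => ?_
          rw [hGapp m, map_sum, Finset.mul_sum]
      _ = ∑ k : Fin (j + 1), ∑ m : Fin (j + 1),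
            ascWordG (σ (j + 1)) (j - m.val + 1) m.val * incl j (A m k (v k)) :=
          Finset.sum_comm
      _ = ∑ k : Fin (j + 1), ascWordG (σ (j + 1)) 1 j *
            (ascWordG (σ (j + 1)) (j - k.val + 1) k.val * incl j (v k)) :=
          Finset.sum_congr rfl fun k _ => hper k (v k)
  rw [trace_transfer e _ G key, hG, trace_pi_blocks]
  rw [Finset.sum_eq_single (Fin.last j)]
  · have : A (Fin.last j) (Fin.last j) =
        (q - q⁻¹) • LinearMap.mulLeft K (ascWordG (σ j) 1 (j - 1)) := by
      have h1 : ¬ (j = 0) := by omega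
      have h2 : ¬ (j + 1 = j) := by omega
      simp [hA, Fin.val_last, h1, h2, Nat.sub_self]
    rw [this, map_smul, smul_eq_mul]
  · intro m _ hm
    have : A m m = 0 := by
      simp only [hA]
      rcases Nat.eq_zero_or_pos m.val with h0 | hpos
      · rw [if_pos h0, if_neg hm]
      · rw [if_neg (by omega), if_neg hm, if_neg (by omega), add_zero]
    rw [this, map_zero]
  · simp

end Main

end Stmt19Aux

open Stmt19Aux in


/-- for the tower of Hecke algebras `H_m(q)` — a tower of
finite-dimensional `K`-algebras of dimension `m!` with generators
`σ_1, …, σ_{m-1}` satisfying the braid and Hecke relations, compatible embeddings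
`H_m(q) ⊂ H_{m+1}(q)`, and the vector-space decompositions
`H_{j+1} = ⊕_{k=0}^{j} H_j·(σ_j σ_{j-1}⋯σ_{j-k+1})`
and `H_{j+1} = ⊕_{k=0}^{j} (σ_{j-k+1}⋯σ_{j-1}σ_j)·H_j` —
the traces of the operators `L_u` of left multiplication satisfy:
(i) `Tr_{H_{j+1}}(L_u) = (j+1)·Tr_{H_j}(L_u)` for `u ∈ H_j ⊂ H_{j+1}`;
(ii) `Tr_{H_{j+1}}(L_{σ_1⋯σ_j}) = (q-q⁻¹)·Tr_{H_j}(L_{σ_1⋯σ_{j-1}})` for `j ≥ 1`;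
(iii) `Tr_{H_j}(L_{σ_{k-l+1}⋯σ_{k-1}σ_k}) = (j!/(l+1)!)·(q-q⁻¹)^l` for `j > k ≥ l`. -/
theorem stmt_19 {K : Type} [Field K] (q : K) (hq0 : q ≠ 0) (hq2 : q ^ 2 ≠ 1)
    (H : ℕ → Type) [∀ m, Ring (H m)] [∀ m, Algebra K (H m)]
    (σ : (m : ℕ) → ℕ → H m)
    (incl : (m : ℕ) → (H m →ₐ[K] H (m + 1)))
    (hdim : ∀ m, Module.finrank K (H m) = m.factorial)
    (hincl : ∀ m i, incl m (σ m i) = σ (m + 1) i)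
    (hbraid : ∀ m i, 1 ≤ i → i + 1 ≤ m - 1 →
      σ m i * σ m (i + 1) * σ m i = σ m (i + 1) * σ m i * σ m (i + 1))
    (hcomm : ∀ m i j, 1 ≤ i → i + 2 ≤ j → j ≤ m - 1 → σ m i * σ m j = σ m j * σ m i)
    (hhecke : ∀ m i, 1 ≤ i → i ≤ m - 1 → σ m i * σ m i = (q - q⁻¹) • σ m i + 1)
    (hdecompR : ∀ j : ℕ, Function.Bijective fun v : Fin (j + 1) → H j =>
      ∑ k : Fin (j + 1), incl j (v k) * descWordG (σ (j + 1)) j k.val)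
    (hdecompL : ∀ j : ℕ, Function.Bijective fun v : Fin (j + 1) → H j =>
      ∑ k : Fin (j + 1), ascWordG (σ (j + 1)) (j - k.val + 1) k.val * incl j (v k)) :
    (∀ (j : ℕ) (u : H j),
        LinearMap.trace K (H (j + 1)) (LinearMap.mulLeft K (incl j u)) =
          ((j : K) + 1) * LinearMap.trace K (H j) (LinearMap.mulLeft K u)) ∧
    (∀ j : ℕ, 1 ≤ j →
        LinearMap.trace K (H (j + 1)) (LinearMap.mulLeft K (ascWordG (σ (j + 1)) 1 j)) =
          (q - q⁻¹) *
            LinearMap.trace K (H j) (LinearMap.mulLeft K (ascWordG (σ j) 1 (j - 1)))) ∧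
    (∀ j k l : ℕ, l ≤ k → k < j →
        LinearMap.trace K (H j) (LinearMap.mulLeft K (ascWordG (σ j) (k - l + 1) l)) =
          ((j.factorial / (l + 1).factorial : ℕ) : K) * (q - q⁻¹) ^ l) := by
  classical
  have hfd : ∀ m, FiniteDimensional K (H m) := fun m =>
    FiniteDimensional.of_finrank_pos (by rw [hdim m]; exact Nat.factorial_pos m)
  have p1 : ∀ (j : ℕ) (u : H j),
      LinearMap.trace K (H (j + 1)) (LinearMap.mulLeft K (incl j u)) =
        ((j : K) + 1) * LinearMap.trace K (H j) (LinearMap.mulLeft K u) := by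
    intro j u
    haveI := hfd j
    exact part1_lemma H σ incl j (hdecompR j) u
  have p2 : ∀ j : ℕ, 1 ≤ j →
      LinearMap.trace K (H (j + 1)) (LinearMap.mulLeft K (ascWordG (σ (j + 1)) 1 j)) =
        (q - q⁻¹) *
          LinearMap.trace K (H j) (LinearMap.mulLeft K (ascWordG (σ j) 1 (j - 1))) := by
    intro j hj
    haveI := hfd j
    exact part2_lemma q H σ incl j hj hincl
      (fun i h1 h2 => hbraid (j + 1) i h1 h2)
      (fun i i2 h1 h2 h3 => hcomm (j + 1) i i2 h1 h2 h3)
      (fun i h1 h2 => hhecke (j + 1) i h1 h2)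
      (hdecompL j)
  have shift : ∀ (m s l : ℕ), 1 ≤ s → s + l + 1 ≤ m →
      LinearMap.trace K (H m) (LinearMap.mulLeft K (ascWordG (σ m) (s + 1) l)) =
        LinearMap.trace K (H m) (LinearMap.mulLeft K (ascWordG (σ m) s l)) := by
    intro m s l hs hsl
    haveI := hfd m
    have hcyc := Stmt19Aux.cyc' (σ m) (m - 1) (hbraid m) (hcomm m) l s hs (by omega)
    obtain ⟨c, hc1⟩ :=
      Stmt19Aux.isUnit_asc (σ m) (m - 1) q (hhecke m) 1 le_rfl (m - 1) (by omega)
    have h1 : ascWordG (σ m) (s + 1) l = (↑c * ascWordG (σ m) s l) * ↑(c⁻¹) := by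
      rw [hc1, hcyc, ← hc1, Units.mul_inv_cancel_right]
    rw [h1, LinearMap.mulLeft_mul, ← Module.End.mul_eq_comp, LinearMap.trace_mul_comm,
      Module.End.mul_eq_comp, ← LinearMap.mulLeft_mul, ← mul_assoc, Units.inv_mul, one_mul]
  have shift1 : ∀ (m l s : ℕ), 1 ≤ s → s + l ≤ m →
      LinearMap.trace K (H m) (LinearMap.mulLeft K (ascWordG (σ m) s l)) =
        LinearMap.trace K (H m) (LinearMap.mulLeft K (ascWordG (σ m) 1 l)) := by
    intro m l s
    induction s with
    | zero => intro h _; exact absurd h (by omega)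
    | succ s ih =>
        intro _ hsl
        rcases Nat.eq_zero_or_pos s with rfl | hpos
        · rfl
        · rw [shift m s l hpos (by omega)]
          exact ih hpos (by omega)
  have incl_asc : ∀ (m s l : ℕ), incl m (ascWordG (σ m) s l) = ascWordG (σ (m + 1)) s l := by
    intro m s l
    unfold ascWordG
    rw [map_list_prod, List.map_map]
    congr 1
    apply List.map_congr_left
    intro t _
    simp only [Function.comp_apply]
    exact hincl m (s + t)
  have base : ∀ (m : ℕ), ∀ l, l + 1 ≤ m →
      LinearMap.trace K (H m) (LinearMap.mulLeft K (ascWordG (σ m) 1 l)) =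
        ((m.factorial / (l + 1).factorial : ℕ) : K) * (q - q⁻¹) ^ l := by
    intro m
    induction m with
    | zero => intro l h; exact absurd h (by omega)
    | succ m ih =>
        intro l hl
        rcases Nat.lt_or_ge l m with hlt | hge
        · rw [← incl_asc m 1 l, p1 m _, ih l (by omega)]
          have hdvd : (l + 1).factorial ∣ m.factorial := Nat.factorial_dvd_factorial (by omega)
          have hfac : (m + 1).factorial / (l + 1).factorial =
              (m + 1) * (m.factorial / (l + 1).factorial) := by
            rw [Nat.factorial_succ, Nat.mul_div_assoc _ hdvd]
          rw [hfac]
          push_cast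
          ring
        · have hlm : l = m := by omega
          subst hlm
          rcases Nat.eq_zero_or_pos l with rfl | hpos
          · haveI := hfd 1
            rw [show ascWordG (σ 1) 1 0 = 1 from rfl, LinearMap.mulLeft_one,
              LinearMap.trace_id, hdim 1]
            simp [Nat.factorial]
          · rw [p2 l hpos, ih (l - 1) (by omega)]
            rw [Nat.div_self (Nat.factorial_pos (l + 1))]
            rw [show l - 1 + 1 = l by omega, Nat.div_self (Nat.factorial_pos l)]
            have hpow : (q - q⁻¹) ^ l = (q - q⁻¹) * (q - q⁻¹) ^ (l - 1) := by
              conv_lhs => rw [show l = (l - 1) + 1 by omega]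
              rw [pow_succ']
            rw [hpow]
            push_cast
            ring
  refine ⟨p1, p2, ?_⟩
  intro j k l hlk hkj
  have h1 := shift1 j l (k - l + 1) (by omega) (by omega)
  rw [h1]
  exact base j l (by omega)
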